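/- Let $I, J$ be finite subsets of $\{1,\dots,N\}$ with $|I| = M$, $|J| = M'$. Let $S = I \cap J$, $T = I \,\Delta\, J$ (symmetric difference), $s = |S|$, $t = |T|$. Suppose $P \subseteq T$ with $|P| = M' - s$ satisfies $S \cup P \succeq J$ and $S \cup (T \setminus P) \succeq I$ in the componentwise order on subsets. Then $S \cup P = J$ and $S \cup (T \setminus P) = I$. -/
import Mathlib


/-- Componentwise order on equal-cardinality subsets: `A ⪯ B` iff `a_p ≤ b_p` for all `p`. -/
def finsetCwLe {N : ℕ} (A B : Finset (Fin N)) : Prop :=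
  ∃ h : A.card = B.card, ∀ p : Fin A.card,
    A.orderEmbOfFin rfl p ≤ B.orderEmbOfFin h.symm p

lemma sumOrderEmbOfFin {N n : ℕ} (s : Finset (Fin N)) (h : s.card = n) :
    ∑ i : Fin n, ((s.orderEmbOfFin h i : Fin N) : ℕ) = ∑ x ∈ s, (x : ℕ) := by
  apply Finset.sum_bij (fun i _ => s.orderEmbOfFin h i)
  · intro a _; exact s.orderEmbOfFin_mem h a
  · intro a _ b _ hab; exact (s.orderEmbOfFin h).injective hab
  · intro x hx
    have : x ∈ Set.range (s.orderEmbOfFin h) := by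
      rw [s.range_orderEmbOfFin h]; exact hx
    obtain ⟨i, hi⟩ := this
    exact ⟨i, Finset.mem_univ i, hi⟩
  · intro a _; rfl

lemma cwLe_sum_le {N : ℕ} {A B : Finset (Fin N)} (h : finsetCwLe A B) :
    ∑ x ∈ A, (x : ℕ) ≤ ∑ x ∈ B, (x : ℕ) := by
  obtain ⟨hc, hle⟩ := h
  rw [← sumOrderEmbOfFin A rfl, ← sumOrderEmbOfFin B hc.symm]
  exact Finset.sum_le_sum fun i _ => Fin.val_le_of_le (hle i)

lemma cwLe_eq_of_sum_eq {N : ℕ} {A B : Finset (Fin N)} (h : finsetCwLe A B)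
    (hs : ∑ x ∈ A, (x : ℕ) = ∑ x ∈ B, (x : ℕ)) : A = B := by
  obtain ⟨hc, hle⟩ := h
  have hsum : ∑ i : Fin A.card, ((A.orderEmbOfFin rfl i : Fin N) : ℕ)
      = ∑ i : Fin A.card, ((B.orderEmbOfFin hc.symm i : Fin N) : ℕ) := by
    rw [sumOrderEmbOfFin A rfl, sumOrderEmbOfFin B hc.symm, hs]
  have key := (Finset.sum_eq_sum_iff_of_le
    (fun i (_ : i ∈ Finset.univ) => Fin.val_le_of_le (hle i))).1 hsum
  have hfun : ∀ i : Fin A.card, A.orderEmbOfFin rfl i = B.orderEmbOfFin hc.symm i :=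
    fun i => Fin.ext (key i (Finset.mem_univ i))
  have : (↑A : Set (Fin N)) = ↑B := by
    rw [← A.range_orderEmbOfFin rfl, ← B.range_orderEmbOfFin hc.symm]
    have hf : ⇑(A.orderEmbOfFin rfl) = ⇑(B.orderEmbOfFin hc.symm) := funext hfun
    rw [hf]
  exact Finset.coe_injective this

theorem stmt7 (N M M' : ℕ) (I J : Finset (Fin N))
    (hI : I.card = M) (hJ : J.card = M')
    (S T P : Finset (Fin N))
    (hS : S = I ∩ J) (hT : T = (I \ J) ∪ (J \ I))
    (hPT : P ⊆ T) (hP : P.card = M' - S.card)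
    (h1 : finsetCwLe J (S ∪ P))
    (h2 : finsetCwLe I (S ∪ (T \ P))) :
    S ∪ P = J ∧ S ∪ (T \ P) = I := by
  have hST : Disjoint S T := by
    rw [hS, hT]
    simp only [Finset.disjoint_union_right]
    constructor <;> [skip; skip] <;>
      · rw [Finset.disjoint_left]; intro a ha hb
        simp only [Finset.mem_inter, Finset.mem_sdiff] at ha hb
        tauto
  have hSP : Disjoint S P := hST.mono_right hPT
  have hSTP : Disjoint S (T \ P) := hST.mono_right (Finset.sdiff_subset)
  have hunion : I ∪ J = S ∪ T := by
    rw [hS, hT]; ext a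
    simp only [Finset.mem_union, Finset.mem_inter, Finset.mem_sdiff]
    tauto
  set σ : Finset (Fin N) → ℕ := fun s => ∑ x ∈ s, (x : ℕ) with hσ
  have e1 : σ (S ∪ P) = σ S + σ P := Finset.sum_union hSP
  have e2 : σ (S ∪ (T \ P)) = σ S + σ (T \ P) := Finset.sum_union hSTP
  have e3 : σ P + σ (T \ P) = σ T := by
    rw [← Finset.sum_union Finset.disjoint_sdiff, Finset.union_sdiff_of_subset hPT]
  have e4 : σ I + σ J = σ S + σ S + σ T := by
    have : σ (I ∪ J) + σ (I ∩ J) = σ I + σ J := Finset.sum_union_inter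
    simp only [hσ] at this ⊢
    rw [← this, hunion, Finset.sum_union hST, ← hS]; ring
  have le1 : σ J ≤ σ (S ∪ P) := cwLe_sum_le h1
  have le2 : σ I ≤ σ (S ∪ (T \ P)) := cwLe_sum_le h2
  have eq1 : σ J = σ (S ∪ P) := by omega
  have eq2 : σ I = σ (S ∪ (T \ P)) := by omega
  exact ⟨(cwLe_eq_of_sum_eq h1 eq1).symm, (cwLe_eq_of_sum_eq h2 eq2).symm⟩
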